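/- arXiv:1802.04352 — 3 statements merged into one kernel-verified Lean document; each statement's English description precedes it below -/
import Mathlib

section
/- Let X ⊆ ℝ contain 0, have 0 as an accumulation point of X, and have an isolated point x ≠ 0. Then in the sphere H = {y ∈ E(X) : ‖y‖ = |x|}, the point (x, 0, 0, …) is isolated. -/
/-!
The coordinate map `y ↦ y 0` is 1-Lipschitz on `ℓ²`, so a point `y` of `H` close to
`(x, 0, 0, …)` has `y 0` close to `x`, hence `y 0 = x` because `x` is isolated in `X`.
A vector of norm `|x|` whose zeroth coordinate is already `x` has no room left for the
other coordinates: it is `(x, 0, 0, …)`.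
-/

open RealInnerProductSpace

theorem eq_of_norm_eq_of_inner_eq_norm_sq {E : Type*} [NormedAddCommGroup E]
    [InnerProductSpace ℝ E] {y s : E} (hnorm : ‖y‖ = ‖s‖) (hinner : ⟪y, s⟫ = ‖s‖ ^ 2) :
    y = s := by
  have hdist : ‖y - s‖ ^ 2 = 0 := by
    rw [norm_sub_sq_real, hnorm, hinner]
    ring
  exact sub_eq_zero.mp (norm_eq_zero.mp (pow_eq_zero_iff two_ne_zero |>.mp hdist))

namespace lp

variable {ι : Type*} [DecidableEq ι] {G : ι → Type*} [∀ i, NormedAddCommGroup (G i)]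

theorem norm_apply_sub_le_norm_sub_single {p : ENNReal} [Fact (1 ≤ p)] (y : lp G p) (i : ι)
    (a : G i) : ‖y i - a‖ ≤ ‖y - lp.single p i a‖ := by
  have hp : p ≠ 0 := (zero_lt_one.trans_le (Fact.out : 1 ≤ p)).ne'
  simpa [lp.single_apply_self] using lp.norm_apply_le_norm hp (y - lp.single p i a) i

variable [∀ i, InnerProductSpace ℝ (G i)]

theorem eq_single_of_apply_eq_of_norm_eq {y : lp G 2} {i : ι} {a : G i} (happly : y i = a)
    (hnorm : ‖y‖ = ‖a‖) : y = lp.single 2 i a := by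
  have hsingle : ‖lp.single 2 i a‖ = ‖a‖ := lp.norm_single (by norm_num) i a
  refine eq_of_norm_eq_of_inner_eq_norm_sq (hnorm.trans hsingle.symm) ?_
  rw [lp.inner_single_right, happly, hsingle, real_inner_self_eq_norm_sq]

end lp

theorem stmt_10_general (X : Set ℝ) (x : ℝ)
    (hiso : ∃ ε > 0, X ∩ Set.Ioo (x - ε) (x + ε) = {x}) :
    ∃ δ > 0, ∀ y : lp (fun _ : ℕ => ℝ) 2, (∀ i, y i ∈ X) → ‖y‖ = |x| →
      ‖y - lp.single 2 0 x‖ < δ → y = lp.single 2 0 x := by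
  obtain ⟨ε, hε, hisolated⟩ := hiso
  refine ⟨ε, hε, fun y hyX hynorm hclose => ?_⟩
  have hcoord : |y 0 - x| < ε :=
    (lp.norm_apply_sub_le_norm_sub_single y 0 x).trans_lt hclose
  have hy0 : y 0 ∈ X ∩ Set.Ioo (x - ε) (x + ε) := by
    obtain ⟨hlow, hhigh⟩ := abs_lt.mp hcoord
    exact ⟨hyX 0, by linarith, by linarith⟩
  rw [hisolated] at hy0
  exact lp.eq_single_of_apply_eq_of_norm_eq hy0 (hynorm.trans (Real.norm_eq_abs x).symm)

theorem stmt_10 (X : Set ℝ) (h0 : (0 : ℝ) ∈ X)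
    (hacc : (0 : ℝ) ∈ closure (X \ {0})) (x : ℝ) (hx : x ∈ X) (hx0 : x ≠ 0)
    (hiso : ∃ ε > 0, X ∩ Set.Ioo (x - ε) (x + ε) = {x}) :
    ∃ δ > 0, ∀ y : lp (fun _ : ℕ => ℝ) 2, (∀ i, y i ∈ X) → ‖y‖ = |x| →
      ‖y - lp.single 2 0 x‖ < δ → y = lp.single 2 0 x :=
  stmt_10_general X x hiso
end

section
/- Let S = {1/n : n ∈ ℕ, n ≥ 1} ∪ {0}. In the space H = {y ∈ E(S) : ‖y‖ = 1}, there is a non-trivial convergent sequence; in particular, H is not discrete. -/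
/-!
The point `z = (1/2, 1/2, 1/2, 1/4, 1/4, 1/4, 1/8, …)`, in which every power `2^{-k}` is repeated
three times, lies on the unit sphere because `3 ∑_{k ≥ 1} 4^{-k} = 1`. Swapping its coordinates
`3n` and `3n + 3`, which carry the distinct values `2^{-(n+1)}` and `2^{-(n+2)}`, gives a point
`y_n ≠ z` of the same set with `‖y_n - z‖ ≤ 2 · 2^{-(n+2)} → 0`.
-/

open Filter Topology

theorem HasSum.comp_nat_div {M : Type*} [AddCommMonoid M] [TopologicalSpace M] [ContinuousAdd M]
    {f : ℕ → M} {a : M} (hf : HasSum f a) (k : ℕ) [NeZero k] :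
    HasSum (fun i => f (i / k)) (k • a) := by
  have hfiber (j : Fin k) : HasSum (fun p : ℕ × Fin k => if p.2 = j then f p.1 else 0) a := by
    refine (Function.Injective.hasSum_iff (g := fun n => (n, j)) (fun m n h => congrArg Prod.fst h)
      ?_).mp (by simpa [Function.comp_def] using hf)
    rintro ⟨n, i⟩ hn
    rw [if_neg]
    rintro rfl
    exact hn ⟨n, rfl⟩
  have hprod : HasSum (fun p : ℕ × Fin k => f p.1) (k • a) := by
    simpa using hasSum_sum (s := Finset.univ) fun j _ => hfiber j
  exact (Nat.divModEquiv k).hasSum_iff.mpr hprod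

theorem Memℓp.of_summable_sq {ι : Type*} {g : ι → ℝ} (hg : Summable fun i => g i ^ 2) :
    Memℓp g 2 :=
  memℓp_gen (by simpa using hg)

namespace lp

variable {ι : Type*}

theorem hasSum_sq_norm (f : lp (fun _ : ι => ℝ) 2) : HasSum (fun i => f i ^ 2) (‖f‖ ^ 2) := by
  simpa using lp.hasSum_norm (p := 2) (by norm_num) f

theorem norm_eq_one_of_hasSum_sq {f : lp (fun _ : ι => ℝ) 2} (hf : HasSum (fun i => f i ^ 2) 1) :
    ‖f‖ = 1 :=
  (pow_eq_one_iff_of_nonneg (norm_nonneg f) two_ne_zero).mp ((hasSum_sq_norm f).unique hf)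

theorem norm_sub_le_of_apply_swap [DecidableEq ι] {E : Type*} [NormedAddCommGroup E]
    {p : ENNReal} [Fact (1 ≤ p)] {f g : lp (fun _ : ι => E) p} {a b : ι}
    (hg : ∀ i, g i = f (Equiv.swap a b i)) : ‖g - f‖ ≤ 2 * ‖f b - f a‖ := by
  have hp : 0 < p := zero_lt_one.trans_le Fact.out
  have hdecomp : g - f = lp.single p a (f b - f a) + lp.single p b (f a - f b) := by
    ext i
    rcases eq_or_ne i a with rfl | hia
    · rcases eq_or_ne i b with rfl | hib <;> simp [*]
    · rcases eq_or_ne i b with rfl | hib <;> simp [Equiv.swap_apply_of_ne_of_ne, *]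
  calc ‖g - f‖ ≤ ‖f b - f a‖ + ‖f a - f b‖ := by
        rw [hdecomp]
        exact (norm_add_le _ _).trans_eq (by rw [lp.norm_single hp, lp.norm_single hp])
    _ = 2 * ‖f b - f a‖ := by rw [norm_sub_rev (f a)]; ring

end lp

noncomputable def tripledHalves (i : ℕ) : ℝ := 2⁻¹ ^ (i / 3 + 1)

theorem tripledHalves_eq_one_div (i : ℕ) :
    ∃ m : ℕ, 1 ≤ m ∧ tripledHalves i = 1 / (m : ℝ) :=
  ⟨2 ^ (i / 3 + 1), Nat.one_le_two_pow, by simp [tripledHalves]⟩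

theorem tripledHalves_three_mul (n : ℕ) : tripledHalves (3 * n) = 2⁻¹ ^ (n + 1) := by
  simp [tripledHalves]

theorem hasSum_tripledHalves_sq : HasSum (fun i => tripledHalves i ^ 2) 1 := by
  have hgeom : HasSum (fun n : ℕ => ((2⁻¹ : ℝ) ^ (n + 1)) ^ 2) 3⁻¹ := by
    have hterm (n : ℕ) : ((2⁻¹ : ℝ) ^ (n + 1)) ^ 2 = 4⁻¹ * 4⁻¹ ^ n := by
      rw [← pow_mul, mul_comm, pow_mul, pow_succ']
      norm_num
    have hval : (3⁻¹ : ℝ) = 4⁻¹ * (1 - 4⁻¹)⁻¹ := by norm_num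
    simpa only [hterm, hval] using
      (hasSum_geometric_of_lt_one (r := (4 : ℝ)⁻¹) (by norm_num) (by norm_num)).mul_left 4⁻¹
  have h := hgeom.comp_nat_div 3
  rwa [show (3 • 3⁻¹ : ℝ) = 1 by norm_num] at h

noncomputable def halvesVec : lp (fun _ : ℕ => ℝ) 2 :=
  ⟨tripledHalves, .of_summable_sq hasSum_tripledHalves_sq.summable⟩

noncomputable def swappedHalvesVec (n : ℕ) : lp (fun _ : ℕ => ℝ) 2 :=
  ⟨tripledHalves ∘ Equiv.swap (3 * n) (3 * (n + 1)),
    .of_summable_sq ((Equiv.swap _ _).hasSum_iff.mpr hasSum_tripledHalves_sq).summable⟩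

theorem swappedHalvesVec_apply (n i : ℕ) :
    swappedHalvesVec n i = tripledHalves (Equiv.swap (3 * n) (3 * (n + 1)) i) :=
  rfl

theorem norm_halvesVec : ‖halvesVec‖ = 1 :=
  lp.norm_eq_one_of_hasSum_sq hasSum_tripledHalves_sq

theorem norm_swappedHalvesVec (n : ℕ) : ‖swappedHalvesVec n‖ = 1 :=
  lp.norm_eq_one_of_hasSum_sq <| by
    simpa only [swappedHalvesVec_apply, Function.comp_def] using
      (Equiv.swap (3 * n) (3 * (n + 1))).hasSum_iff.mpr hasSum_tripledHalves_sq

theorem swappedHalvesVec_ne (n : ℕ) : swappedHalvesVec n ≠ halvesVec := by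
  intro h
  have h3n := congrArg (fun v : lp (fun _ : ℕ => ℝ) 2 => v (3 * n)) h
  simp only [swappedHalvesVec_apply, halvesVec, Equiv.swap_apply_left,
    tripledHalves_three_mul] at h3n
  exact (pow_lt_pow_right_of_lt_one₀ (a := (2⁻¹ : ℝ)) (by norm_num) (by norm_num)
    (Nat.lt_succ_self (n + 1))).ne h3n

theorem tendsto_swappedHalvesVec : Tendsto swappedHalvesVec atTop (𝓝 halvesVec) := by
  have hhalves : Tendsto (fun n : ℕ => (2⁻¹ : ℝ) ^ (n + 1)) atTop (𝓝 0) :=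
    (tendsto_pow_atTop_nhds_zero_of_lt_one (by norm_num) (by norm_num)).comp
      (tendsto_add_atTop_nat 1)
  have hbound :
      Tendsto (fun n : ℕ => 2 * ‖(2⁻¹ : ℝ) ^ (n + 1 + 1) - 2⁻¹ ^ (n + 1)‖) atTop (𝓝 0) := by
    simpa using ((hhalves.comp (tendsto_add_atTop_nat 1)).sub hhalves).norm.const_mul 2
  refine tendsto_iff_norm_sub_tendsto_zero.mpr
    (squeeze_zero (fun _ => norm_nonneg _) (fun n => ?_) hbound)
  rw [← tripledHalves_three_mul, ← tripledHalves_three_mul]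
  exact lp.norm_sub_le_of_apply_swap fun i => rfl

theorem stmt_11 :
    ∃ (y : ℕ → lp (fun _ : ℕ => ℝ) 2) (z : lp (fun _ : ℕ => ℝ) 2),
      (∀ n, (∀ i, y n i ∈ {t : ℝ | (∃ m : ℕ, 1 ≤ m ∧ t = 1 / (m : ℝ)) ∨ t = 0}) ∧ ‖y n‖ = 1) ∧
      ((∀ i, z i ∈ {t : ℝ | (∃ m : ℕ, 1 ≤ m ∧ t = 1 / (m : ℝ)) ∨ t = 0}) ∧ ‖z‖ = 1) ∧
      (∀ n, y n ≠ z) ∧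
      Filter.Tendsto y Filter.atTop (nhds z) :=
  ⟨swappedHalvesVec, halvesVec,
    fun n => ⟨fun _ => .inl (tripledHalves_eq_one_div _), norm_swappedHalvesVec n⟩,
    ⟨fun _ => .inl (tripledHalves_eq_one_div _), norm_halvesVec⟩,
    swappedHalvesVec_ne, tendsto_swappedHalvesVec⟩
end

section
/- Let M be a nonempty completely metrizable separable space without isolated points, and let (g_n) be a countable family of continuous real-valued functions on M such that for every countable C ⊆ ℝ the set M \ ⋃_n g_n⁻¹[C] is uncountable. Then there is a Cantor set K ⊆ M on which every g_n is injective. -/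
/-!
Call a set `U` large if for every countable `C ⊆ ℝ` uncountably many points of `U` avoid
`⋃ₙ gₙ⁻¹[C]`. By Lindelöf, the points with a non-large open neighbourhood avoid some fixed
countable set of values only countably often, so every large set contains points of the large
kernel (the points all of whose open neighbourhoods are large) avoiding any prescribed countable
set of values. We build a binary tree of nested closed balls centred in the kernel with radii
`≤ 2⁻ⁿ`: the `2ⁿ⁺¹` new centres are chosen one at a time, each avoiding all values of the earlier
ones, and the radii are then shrunk until, for `k ≤ n`, distinct balls have disjoint `gₖ`-images.
The limit map `(ℕ → Bool) → M` is continuous and every `gₖ` is injective on its image.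
-/

open Metric Set Filter Topology

theorem exists_seq_of_forall_exists_succ {α : ℕ → Type*} (p : ∀ n, α n → Prop)
    (q : ∀ n, α n → α (n + 1) → Prop) (h₀ : ∃ a, p 0 a)
    (hsucc : ∀ n a, p n a → ∃ b, p (n + 1) b ∧ q n a b) :
    ∃ f : ∀ n, α n, ∀ n, p n (f n) ∧ q n (f n) (f (n + 1)) := by
  choose next hnext using hsucc
  let F : ∀ n, {a : α n // p n a} :=
    fun n => Nat.rec ⟨h₀.choose, h₀.choose_spec⟩
      (fun n a => ⟨next n a.1 a.2, (hnext n a.1 a.2).1⟩) n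
  exact ⟨fun n => (F n).1, fun n => ⟨(F n).2, (hnext n _ (F n).2).2⟩⟩

theorem eventually_disjoint_image_closedBall {M X : Type*} [PseudoMetricSpace M]
    [TopologicalSpace X] [T2Space X] {f : M → X} {a b : M} (ha : ContinuousAt f a)
    (hb : ContinuousAt f b) (hab : f a ≠ f b) :
    ∀ᶠ δ in 𝓝 (0 : ℝ), Disjoint (f '' closedBall a δ) (f '' closedBall b δ) := by
  obtain ⟨V, W, hV, hW, haV, hbW, hVW⟩ := t2_separation hab
  filter_upwards [eventually_closedBall_subset (ha.preimage_mem_nhds (hV.mem_nhds haV)),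
    eventually_closedBall_subset (hb.preimage_mem_nhds (hW.mem_nhds hbW))] with δ hδa hδb
  exact hVW.mono (image_subset_iff.2 hδa) (image_subset_iff.2 hδb)

section Scheme

variable {M : Type*} [PseudoMetricSpace M]

theorem exists_continuous_forall_mem_closedBall [CompleteSpace M]
    (x : ∀ n, (Fin n → Bool) → M) (r : ℕ → ℝ) (hr0 : ∀ n, 0 ≤ r n)
    (hr : Tendsto r atTop (𝓝 0))
    (hnest : ∀ n (t : Fin (n + 1) → Bool),
      closedBall (x (n + 1) t) (r (n + 1)) ⊆ closedBall (x n (Fin.init t)) (r n)) :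
    ∃ f : (ℕ → Bool) → M, Continuous f ∧ ∀ σ n, f σ ∈ closedBall (x n (σ ∘ (↑))) (r n) := by
  set u : (ℕ → Bool) → ℕ → M := fun σ n => x n (σ ∘ (↑))
  have hmono : ∀ σ n m, n ≤ m → closedBall (u σ m) (r m) ⊆ closedBall (u σ n) (r n) := by
    intro σ n m hnm
    induction m, hnm using Nat.le_induction with
    | base => exact Subset.rfl
    | succ m _ ih => exact (hnest m (σ ∘ (↑))).trans ih
  have hu : ∀ σ n m, n ≤ m → u σ m ∈ closedBall (u σ n) (r n) :=
    fun σ n m hnm => hmono σ n m hnm (mem_closedBall_self (hr0 m))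
  have hcauchy : ∀ σ, CauchySeq (u σ) := fun σ =>
    cauchySeq_of_le_tendsto_0 (fun N => 2 * r N) (fun n m N hn hm => by
      linarith [dist_triangle_right (u σ n) (u σ m) (u σ N), mem_closedBall.1 (hu σ N n hn),
        mem_closedBall.1 (hu σ N m hm)]) (by simpa using hr.const_mul 2)
  choose f hf using fun σ => cauchySeq_tendsto_of_complete (hcauchy σ)
  have hmem : ∀ σ n, f σ ∈ closedBall (u σ n) (r n) := fun σ n =>
    isClosed_closedBall.mem_of_tendsto (hf σ) (eventually_atTop.2 ⟨n, hu σ n⟩)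
  refine ⟨f, continuous_iff_continuousAt.2 fun σ => Metric.tendsto_nhds.2 fun ε hε => ?_, hmem⟩
  obtain ⟨N, hN⟩ := (hr.eventually (gt_mem_nhds (half_pos hε))).exists
  filter_upwards [(PiNat.isOpen_cylinder _ σ N).mem_nhds (PiNat.self_mem_cylinder σ N)] with τ hτ
  have hστ : u τ N = u σ N := congrArg (x N) (funext fun i => PiNat.mem_cylinder_iff.1 hτ i i.2)
  have h₁ := mem_closedBall.1 (hmem τ N)
  have h₂ := mem_closedBall.1 (hmem σ N)
  rw [hστ] at h₁
  linarith [dist_triangle_right (f τ) (f σ) (u σ N)]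

theorem injective_comp_of_forall_mem_closedBall {β : Type*} {g : ℕ → M → β}
    {x : ∀ n, (Fin n → Bool) → M} {r : ℕ → ℝ}
    (hsep : ∀ n, Pairwise fun s t => ∀ k < n,
      Disjoint (g k '' closedBall (x n s) (r n)) (g k '' closedBall (x n t) (r n)))
    {f : (ℕ → Bool) → M} (hf : ∀ σ n, f σ ∈ closedBall (x n (σ ∘ (↑))) (r n)) (k : ℕ) :
    Function.Injective (g k ∘ f) := by
  intro σ τ hστ
  by_contra hne
  obtain ⟨i, hi⟩ := Function.ne_iff.1 hne
  have hres : σ ∘ ((↑) : Fin (max i k + 1) → ℕ) ≠ τ ∘ (↑) :=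
    fun h => hi (congrFun h ⟨i, by omega⟩)
  exact (hsep _ hres k (by omega)).ne_of_mem (mem_image_of_mem _ (hf σ _))
    (mem_image_of_mem _ (hf τ _)) hστ

end Scheme

section Kernel

variable {M : Type*} [TopologicalSpace M] (g : ℕ → M → ℝ)

def IsLarge (U : Set M) : Prop :=
  ∀ C : Set ℝ, C.Countable → ¬ (U ∩ {x | ∀ n, g n x ∉ C}).Countable

def largeKernel : Set M :=
  {x | ∀ U, IsOpen U → x ∈ U → IsLarge g U}

theorem exists_countable_forall_countable_compl_largeKernel [SecondCountableTopology M] :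
    ∃ C₀ : Set ℝ, C₀.Countable ∧
      ∀ C, C₀ ⊆ C → ((largeKernel g)ᶜ ∩ {x | ∀ n, g n x ∉ C}).Countable := by
  set 𝒰 : Set (Set M) := {U | IsOpen U ∧ ¬ IsLarge g U}
  obtain ⟨T, hTc, hT𝒰, hTU⟩ := TopologicalSpace.isOpen_sUnion_countable 𝒰 fun U hU => hU.1
  have hsmall : ∀ U ∈ T, ∃ C : Set ℝ, C.Countable ∧ (U ∩ {x | ∀ n, g n x ∉ C}).Countable := by
    intro U hU
    simpa [IsLarge] using (hT𝒰 hU).2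
  choose! C hCc hC using hsmall
  refine ⟨⋃ U ∈ T, C U, hTc.biUnion hCc, fun D hD => ?_⟩
  have hcompl : (largeKernel g)ᶜ = ⋃₀ 𝒰 := by
    ext x
    simp only [largeKernel, 𝒰, mem_compl_iff, mem_ofPred_eq, mem_sUnion]
    push Not
    exact exists_congr fun U => by tauto
  rw [hcompl, ← hTU, sUnion_eq_biUnion, iUnion₂_inter]
  refine hTc.biUnion fun U hU => (hC U hU).mono ?_
  exact inter_subset_inter_right _ fun x hx n hn => hx n (hD (mem_biUnion hU hn))

variable {g}

theorem IsLarge.exists_mem_largeKernel [SecondCountableTopology M] {U : Set M}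
    (hU : IsLarge g U) {C : Set ℝ} (hC : C.Countable) :
    ∃ y ∈ U ∩ largeKernel g, ∀ n, g n y ∉ C := by
  obtain ⟨C₀, hC₀, hsmall⟩ := exists_countable_forall_countable_compl_largeKernel g
  have hsub := hsmall (C ∪ C₀) subset_union_right
  by_contra! hcon
  refine hU _ (hC.union hC₀) (hsub.mono ?_)
  rintro y ⟨hyU, hyC⟩
  refine ⟨fun hyK => ?_, hyC⟩
  obtain ⟨n, hn⟩ := hcon y ⟨hyU, hyK⟩
  exact hyC n (Or.inl hn)

end Kernel

section Levels

variable {M : Type*} [PseudoMetricSpace M] (g : ℕ → M → ℝ)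

def IsSeparatingLevel (n : ℕ) (x : (Fin n → Bool) → M) (r : ℝ) : Prop :=
  (∀ s, x s ∈ largeKernel g) ∧ 0 < r ∧ r ≤ (1 / 2) ^ n ∧
    Pairwise fun s t => ∀ k < n, Disjoint (g k '' closedBall (x s) r) (g k '' closedBall (x t) r)

variable {g}

theorem isSeparatingLevel_zero {x : M} (hx : x ∈ largeKernel g) :
    IsSeparatingLevel g 0 (fun _ => x) 1 :=
  ⟨fun _ => hx, one_pos, by norm_num, fun _ _ _ k hk => absurd hk k.not_lt_zero⟩

theorem exists_mem_largeKernel_pairwise_ne [SecondCountableTopology M] {ι : Type*} [Finite ι]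
    {U : ι → Set M} (hU : ∀ i, IsLarge g (U i)) :
    ∃ y : ι → M, (∀ i, y i ∈ U i ∩ largeKernel g) ∧
      Pairwise fun i j => ∀ k, g k (y i) ≠ g k (y j) := by
  classical
  have := Fintype.ofFinite ι
  suffices ∀ s : Finset ι, ∃ y : ι → M, (∀ i, y i ∈ U i ∩ largeKernel g) ∧
      (s : Set ι).Pairwise fun i j => ∀ k, g k (y i) ≠ g k (y j) by
    obtain ⟨y, hyU, hy⟩ := this Finset.univ
    exact ⟨y, hyU, fun i j hij => hy (Finset.mem_univ i) (Finset.mem_univ j) hij⟩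
  intro s
  induction s using Finset.induction_on with
  | empty =>
    choose y hy _ using fun i => (hU i).exists_mem_largeKernel countable_empty
    exact ⟨y, hy, by simp⟩
  | insert a s ha ih =>
    obtain ⟨y, hyU, hy⟩ := ih
    obtain ⟨z, hzU, hz⟩ := (hU a).exists_mem_largeKernel
      (s.countable_toSet.biUnion fun j _ => countable_range fun k => g k (y j))
    have hya : ∀ j ∈ s, Function.update y a z j = y j :=
      fun j hj => Function.update_of_ne (ne_of_mem_of_not_mem hj ha) _ _
    refine ⟨Function.update y a z, fun i => ?_, ?_⟩
    · rcases eq_or_ne i a with rfl | hi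
      · simpa using hzU
      · simpa [hi] using hyU i
    rw [Finset.coe_insert, pairwise_insert]
    refine ⟨fun i hi j hj hij k => ?_, fun j hj _ => ⟨fun k h => ?_, fun k h => ?_⟩⟩
    · rw [hya i hi, hya j hj]
      exact hy hi hj hij k
    · rw [hya j hj, Function.update_self] at h
      exact hz k (mem_biUnion hj ⟨k, h.symm⟩)
    · rw [hya j hj, Function.update_self] at h
      exact hz k (mem_biUnion hj ⟨k, h⟩)

theorem IsSeparatingLevel.exists_succ [SecondCountableTopology M] (hg : ∀ k, Continuous (g k))
    {n : ℕ} {x : (Fin n → Bool) → M} {r : ℝ} (h : IsSeparatingLevel g n x r) :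
    ∃ y δ, IsSeparatingLevel g (n + 1) y δ ∧
      ∀ t, closedBall (y t) δ ⊆ closedBall (x (Fin.init t)) r := by
  obtain ⟨hxK, hr, -, -⟩ := h
  obtain ⟨y, hy, hyne⟩ := exists_mem_largeKernel_pairwise_ne
    (U := fun t : Fin (n + 1) → Bool => ball (x (Fin.init t)) r)
    fun t => hxK _ _ isOpen_ball (mem_ball_self hr)
  have hev : ∀ᶠ δ in 𝓝 (0 : ℝ), δ ≤ (1 / 2) ^ (n + 1) ∧
      (∀ t, closedBall (y t) δ ⊆ ball (x (Fin.init t)) r) ∧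
      ∀ s t, s ≠ t → ∀ k < n + 1,
        Disjoint (g k '' closedBall (y s) δ) (g k '' closedBall (y t) δ) := by
    refine (eventually_le_nhds (by positivity)).and (.and ?_ ?_)
    · exact eventually_all.2 fun t => eventually_closedBall_subset (isOpen_ball.mem_nhds (hy t).1)
    · refine eventually_all.2 fun s => eventually_all.2 fun t =>
        eventually_imp_distrib_left.2 fun hst => (eventually_all_finite (finite_lt_nat _)).2
          fun k _ => ?_
      exact eventually_disjoint_image_closedBall (hg k).continuousAt (hg k).continuousAt
        (hyne hst k)
  obtain ⟨δ, ⟨hδ, hδsub, hδsep⟩, hδ0⟩ :=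
    ((hev.filter_mono nhdsWithin_le_nhds).and (self_mem_nhdsWithin (s := Ioi 0))).exists
  exact ⟨y, δ, ⟨fun t => (hy t).2, hδ0, hδ, hδsep⟩,
    fun t => (hδsub t).trans ball_subset_closedBall⟩

end Levels

theorem stmt_18_general (M : Type) [MetricSpace M] [CompleteSpace M]
    [TopologicalSpace.SeparableSpace M]
    (g : ℕ → M → ℝ) (hg : ∀ n, Continuous (g n))
    (huncount : ∀ C : Set ℝ, C.Countable → ¬ {x : M | ∀ n, g n x ∉ C}.Countable) :
    ∃ K : Set M, Nonempty (K ≃ₜ (ℕ → Bool)) ∧ ∀ n, Set.InjOn (g n) K := by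
  obtain ⟨x₀, hx₀, -⟩ := IsLarge.exists_mem_largeKernel (g := g) (U := univ)
    (fun C hC => by simpa using huncount C hC) countable_empty
  obtain ⟨lev, hlev⟩ := exists_seq_of_forall_exists_succ
    (fun n (a : ((Fin n → Bool) → M) × ℝ) => IsSeparatingLevel g n a.1 a.2)
    (fun n a b => ∀ t, closedBall (b.1 t) b.2 ⊆ closedBall (a.1 (Fin.init t)) a.2)
    ⟨(fun _ => x₀, 1), isSeparatingLevel_zero hx₀.2⟩
    fun n a ha => let ⟨y, δ, h⟩ := IsSeparatingLevel.exists_succ hg ha; ⟨(y, δ), h⟩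
  obtain ⟨f, hf, hmem⟩ := exists_continuous_forall_mem_closedBall (fun n => (lev n).1)
    (fun n => (lev n).2) (fun n => (hlev n).1.2.1.le)
    (squeeze_zero (fun n => (hlev n).1.2.1.le) (fun n => (hlev n).1.2.2.1)
      (tendsto_pow_atTop_nhds_zero_of_lt_one (by norm_num) (by norm_num)))
    fun n => (hlev n).2
  have hinj := injective_comp_of_forall_mem_closedBall (fun n => (hlev n).1.2.2.2) hmem
  exact ⟨range f, ⟨(hf.isClosedEmbedding (hinj 0).of_comp).toIsEmbedding.toHomeomorph.symm⟩,
    fun k => (hinj k).injOn_range⟩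

theorem stmt_18 (M : Type) [MetricSpace M] [CompleteSpace M]
    [TopologicalSpace.SeparableSpace M] [Nonempty M]
    (hperf : ∀ x : M, ¬ IsOpen ({x} : Set M))
    (g : ℕ → M → ℝ) (hg : ∀ n, Continuous (g n))
    (huncount : ∀ C : Set ℝ, C.Countable → ¬ {x : M | ∀ n, g n x ∉ C}.Countable) :
    ∃ K : Set M, Nonempty (K ≃ₜ (ℕ → Bool)) ∧ ∀ n, Set.InjOn (g n) K :=
  stmt_18_general M g hg huncount
end
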